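/- arXiv:2206.03907 — 3 statements merged into one kernel-verified Lean document; each statement's English description precedes it below -/
import Mathlib

section
/- Let Φ : ℝⁿ → ℝᵐ be L-Lipschitz continuous, and let {x^k} ⊆ ℝⁿ and {μ_k} ⊆ (0,∞) be sequences with {μ_k} bounded and ∑_{k=0}^∞ μ_k = ∞. Suppose there is a ≥ 1 with ∑_{k=0}^∞ μ_k ‖Φ(x^k)‖^a < ∞, and there exist constants A, B ≥ 0, b ∈ [0,a], q ≥ 1, p₁, p₂ ≥ q such that ‖x^{k+1} − x^k‖^q ≤ A μ_k^{p₁} + B μ_k^{p₂} ‖Φ(x^k)‖^b for all k. Then ‖Φ(x^k)‖ → 0 as k → ∞. -/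
open Filter

set_option maxHeartbeats 1000000

private lemma rpow_add_le_add_rpow' {u v p : ℝ} (hu : 0 ≤ u) (hv : 0 ≤ v)
    (hp : 0 ≤ p) (hp1 : p ≤ 1) : (u + v) ^ p ≤ u ^ p + v ^ p := by
  lift u to NNReal using hu
  lift v to NNReal using hv
  exact_mod_cast NNReal.rpow_add_le_add_rpow u v hp hp1

private lemma aux_main (f μ : ℕ → ℝ) (L a A B b q p₁ p₂ : ℝ)
    (hL : 0 < L)
    (hf0 : ∀ k, 0 ≤ f k)
    (hμpos : ∀ k, 0 < μ k)
    (hμdiv : ¬ Summable μ)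
    (ha : 1 ≤ a)
    (hsum : Summable (fun k => μ k * f k ^ a))
    (hA : 0 ≤ A) (hB : 0 ≤ B)
    (hb0 : 0 ≤ b) (hba : b ≤ a)
    (hq : 1 ≤ q) (hp₁ : q ≤ p₁) (hp₂ : q ≤ p₂)
    (hstep : ∀ k, f k - f (k+1) ≤ L * (A * μ k ^ p₁ + B * μ k ^ p₂ * f k ^ b) ^ (1/q)) :
    Tendsto f atTop (nhds 0) := by
  by_contra hcon
  rw [Metric.tendsto_atTop] at hcon
  push_neg at hcon
  obtain ⟨ε0, hε0, hfreq⟩ := hcon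
  have hfreq' : ∀ N : ℕ, ∃ t, N ≤ t ∧ ε0 ≤ f t := by
    intro N
    obtain ⟨t, ht, h2⟩ := hfreq N
    refine ⟨t, ht, ?_⟩
    rwa [Real.dist_eq, sub_zero, abs_of_nonneg (hf0 t)] at h2
  clear hfreq
  set e : ℝ := ε0 / 2 with he_def
  have he : 0 < e := by positivity
  have he2 : 2 * e = ε0 := by rw [he_def]; ring
  clear_value e
  have ha0 : (0:ℝ) ≤ a := le_trans zero_le_one ha
  have hq0 : (0:ℝ) < q := lt_of_lt_of_le one_pos hq
  set r : ℝ := 1 / q with hr_def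
  have hr0 : 0 < r := by positivity
  have hr1 : r ≤ 1 := by rw [hr_def, div_le_one hq0]; exact hq
  have hr1q : ∀ p : ℝ, q ≤ p → (1:ℝ) ≤ p * r := by
    intro p hp
    rw [hr_def, mul_one_div, le_div_iff₀ hq0, one_mul]; exact hp
  clear_value r
  set g : ℕ → ℝ := fun k => μ k * f k ^ a with hg_def
  have hgk : ∀ k, g k = μ k * f k ^ a := fun k => by rw [hg_def]
  have hg0 : ∀ k, 0 ≤ g k := fun k => by
    rw [hgk]; exact mul_nonneg (hμpos k).le (Real.rpow_nonneg (hf0 k) a)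
  have hsumg : Summable g := hsum
  clear_value g
  clear hsum hg_def
  set P : ℕ → ℝ := fun n => ∑ k ∈ Finset.range n, g k with hP_def
  set S : ℝ := ∑' k, g k with hS_def
  have hP : Tendsto P atTop (nhds S) := hsumg.hasSum.tendsto_sum_nat
  have hPle : ∀ n, P n ≤ S := fun n => Summable.sum_le_tsum _ (fun i _ => hg0 i) hsumg
  have hPmono : Monotone P := fun i j hij =>
    Finset.sum_le_sum_of_subset_of_nonneg (Finset.range_subset_range.mpr hij)
      (fun k _ _ => hg0 k)
  have hPIco : ∀ t u : ℕ, t ≤ u → ∑ k ∈ Finset.Ico t u, g k = P u - P t := by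
    intro t u htu
    rw [hP_def]
    exact Finset.sum_Ico_eq_sub _ htu
  clear_value P S
  clear hP_def hS_def
  have hea : (0:ℝ) < e ^ a := Real.rpow_pos_of_pos he a
  -- f drops below e infinitely often
  have low : ∀ N : ℕ, ∃ u, N ≤ u ∧ f u ≤ e := by
    intro N
    by_contra hlow
    push_neg at hlow
    apply hμdiv
    apply (summable_nat_add_iff N).mp
    have hcmp : Summable (fun k : ℕ => (e ^ a)⁻¹ * g (k + N)) :=
      ((summable_nat_add_iff N).mpr hsumg).mul_left _
    refine Summable.of_nonneg_of_le (fun k => (hμpos _).le) (fun k => ?_) hcmp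
    rw [inv_mul_eq_div, le_div_iff₀ hea, hgk]
    apply mul_le_mul_of_nonneg_left _ (hμpos _).le
    exact Real.rpow_le_rpow he.le (hlow _ (Nat.le_add_left N k)).le ha0
  -- constants
  set C0 : ℝ := L * (A ^ r * e ^ (-a) + B ^ r * e ^ (b * r - a)) with hC0_def
  have hC0 : 0 ≤ C0 := by
    rw [hC0_def]
    apply mul_nonneg hL.le
    apply add_nonneg
    · exact mul_nonneg (Real.rpow_nonneg hA r) (Real.rpow_nonneg he.le _)
    · exact mul_nonneg (Real.rpow_nonneg hB r) (Real.rpow_nonneg he.le _)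
  set δ : ℝ := min (e ^ a) (e / (C0 + 1)) with hδ_def
  have hδ : 0 < δ := lt_min hea (by positivity)
  have hδ1 : δ ≤ e ^ a := min_le_left _ _
  have hδ2 : δ ≤ e / (C0 + 1) := min_le_right _ _
  clear_value δ
  clear hδ_def
  -- tail
  obtain ⟨N, hN⟩ := Metric.tendsto_atTop.mp hP δ hδ
  have htail : S - P N < δ := by
    have h := hN N le_rfl
    rw [Real.dist_eq] at h
    calc S - P N ≤ |P N - S| := by rw [abs_sub_comm]; exact le_abs_self _
      _ < δ := h
  -- crossing
  obtain ⟨t, htN, hft⟩ := hfreq' N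
  have hft' : 2 * e ≤ f t := by rw [he2]; exact hft
  have hex : ∃ u, t + 1 ≤ u ∧ f u ≤ e := low (t + 1)
  obtain ⟨hu1, hfu⟩ := Nat.find_spec hex
  have hmin : ∀ k, t + 1 ≤ k → k < Nat.find hex → e < f k := by
    intro k hk1 hk2
    by_contra hc
    exact Nat.find_min hex hk2 ⟨hk1, le_of_not_gt hc⟩
  set u : ℕ := Nat.find hex with hu_def

  clear_value u
  clear hu_def
  have htu : t ≤ u := le_trans (Nat.le_succ t) hu1
  have hwin : ∀ k ∈ Finset.Ico t u, e ≤ f k := by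
    intro k hk
    rw [Finset.mem_Ico] at hk
    rcases eq_or_lt_of_le hk.1 with h | h
    · subst h; linarith
    · exact (hmin k h hk.2).le
  have hwsum : ∑ k ∈ Finset.Ico t u, g k < δ := by
    rw [hPIco t u htu]
    have h1 : P N ≤ P t := hPmono htN
    have h2 : P u ≤ S := hPle u
    linarith
  have hμ1 : ∀ k ∈ Finset.Ico t u, μ k ≤ 1 := by
    intro k hk
    have h1 : g k ≤ ∑ j ∈ Finset.Ico t u, g j :=
      Finset.single_le_sum (fun j _ => hg0 j) hk
    have h2 : μ k * e ^ a ≤ g k := by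
      rw [hgk]
      apply mul_le_mul_of_nonneg_left _ (hμpos k).le
      exact Real.rpow_le_rpow he.le (hwin k hk) ha0
    nlinarith [hμpos k]
  -- per-step bound
  have hstepb : ∀ k ∈ Finset.Ico t u,
      L * (A * μ k ^ p₁ + B * μ k ^ p₂ * f k ^ b) ^ r ≤ C0 * g k := by
    intro k hk
    have hμk0 : 0 < μ k := hμpos k
    have hμk1 : μ k ≤ 1 := hμ1 k hk
    have hFe : e ≤ f k := hwin k hk
    have hF0 : 0 < f k := lt_of_lt_of_le he hFe
    have h1 : (A * μ k ^ p₁ + B * μ k ^ p₂ * f k ^ b) ^ r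
        ≤ (A * μ k ^ p₁) ^ r + (B * μ k ^ p₂ * f k ^ b) ^ r :=
      rpow_add_le_add_rpow'
        (mul_nonneg hA (Real.rpow_nonneg hμk0.le _))
        (mul_nonneg (mul_nonneg hB (Real.rpow_nonneg hμk0.le _))
          (Real.rpow_nonneg hF0.le _)) hr0.le hr1
    have hμpow : ∀ p : ℝ, q ≤ p → μ k ^ (p * r) ≤ μ k := by
      intro p hp
      calc μ k ^ (p * r) ≤ μ k ^ (1:ℝ) :=
            Real.rpow_le_rpow_of_exponent_ge hμk0 hμk1 (hr1q p hp)
        _ = μ k := Real.rpow_one _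
    have hμg : μ k ≤ e ^ (-a) * g k := by
      rw [Real.rpow_neg he.le, inv_mul_eq_div, le_div_iff₀ hea, hgk]
      apply mul_le_mul_of_nonneg_left _ hμk0.le
      exact Real.rpow_le_rpow he.le hFe ha0
    have hFpow : f k ^ (b * r) ≤ e ^ (b * r - a) * f k ^ a := by
      have hbr : b * r - a ≤ 0 := by nlinarith
      have h2 : f k ^ (b * r - a) ≤ e ^ (b * r - a) :=
        Real.rpow_le_rpow_of_nonpos he hFe hbr
      calc f k ^ (b * r) = f k ^ (b * r - a) * f k ^ a := by
            rw [← Real.rpow_add hF0]; ring_nf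
        _ ≤ e ^ (b * r - a) * f k ^ a :=
            mul_le_mul_of_nonneg_right h2 (Real.rpow_nonneg hF0.le a)
    have hT1 : (A * μ k ^ p₁) ^ r ≤ A ^ r * (e ^ (-a) * g k) := by
      rw [Real.mul_rpow hA (Real.rpow_nonneg hμk0.le _), ← Real.rpow_mul hμk0.le]
      apply mul_le_mul_of_nonneg_left _ (Real.rpow_nonneg hA r)
      exact le_trans (hμpow p₁ hp₁) hμg
    have hT2 : (B * μ k ^ p₂ * f k ^ b) ^ r
        ≤ B ^ r * (e ^ (b * r - a) * g k) := by
      rw [Real.mul_rpow (mul_nonneg hB (Real.rpow_nonneg hμk0.le _))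
          (Real.rpow_nonneg hF0.le _),
        Real.mul_rpow hB (Real.rpow_nonneg hμk0.le _),
        ← Real.rpow_mul hμk0.le, ← Real.rpow_mul hF0.le]
      have h2 : μ k ^ (p₂ * r) * f k ^ (b * r)
          ≤ μ k * (e ^ (b * r - a) * f k ^ a) :=
        mul_le_mul (hμpow p₂ hp₂) hFpow (Real.rpow_nonneg hF0.le _) hμk0.le
      calc B ^ r * μ k ^ (p₂ * r) * f k ^ (b * r)
          = B ^ r * (μ k ^ (p₂ * r) * f k ^ (b * r)) := by ring
        _ ≤ B ^ r * (μ k * (e ^ (b * r - a) * f k ^ a)) :=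
            mul_le_mul_of_nonneg_left h2 (Real.rpow_nonneg hB r)
        _ = B ^ r * (e ^ (b * r - a) * g k) := by rw [hgk]; ring
    calc L * (A * μ k ^ p₁ + B * μ k ^ p₂ * f k ^ b) ^ r
        ≤ L * ((A * μ k ^ p₁) ^ r + (B * μ k ^ p₂ * f k ^ b) ^ r) :=
          mul_le_mul_of_nonneg_left h1 hL.le
      _ ≤ L * (A ^ r * (e ^ (-a) * g k) + B ^ r * (e ^ (b * r - a) * g k)) := by
          apply mul_le_mul_of_nonneg_left _ hL.le
          exact add_le_add hT1 hT2
      _ = C0 * g k := by rw [hC0_def]; ring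
  clear_value C0
  -- telescoping
  have htel : ∀ v, t ≤ v → f t ≤ f v +
      ∑ k ∈ Finset.Ico t v, L * (A * μ k ^ p₁ + B * μ k ^ p₂ * f k ^ b) ^ r := by
    intro v hv
    induction v, hv using Nat.le_induction with
    | base => simp
    | succ v hv ih =>
      rw [Finset.sum_Ico_succ_top hv]
      have h := hstep v

      linarith
  -- combine
  have h1 := htel u htu
  have h2 : ∑ k ∈ Finset.Ico t u, L * (A * μ k ^ p₁ + B * μ k ^ p₂ * f k ^ b) ^ r
      ≤ ∑ k ∈ Finset.Ico t u, C0 * g k := Finset.sum_le_sum hstepb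
  have h3 : ∑ k ∈ Finset.Ico t u, C0 * g k = C0 * ∑ k ∈ Finset.Ico t u, g k :=
    (Finset.mul_sum _ _ _).symm
  have hCw : C0 * ∑ k ∈ Finset.Ico t u, g k ≤ C0 * δ :=
    mul_le_mul_of_nonneg_left hwsum.le hC0
  have hCδ : C0 * δ < e := by
    have hh : C0 * δ ≤ C0 * (e / (C0 + 1)) := mul_le_mul_of_nonneg_left hδ2 hC0
    have hc1 : (0:ℝ) < C0 + 1 := by linarith
    have hh2 : C0 * (e / (C0 + 1)) < e := by
      rw [mul_div_assoc', div_lt_iff₀ hc1]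
      nlinarith
    linarith
  linarith

/-- Deterministic unified convergence theorem (Theorem 2.1(i), pathwise). -/
theorem stmt_0 {n m : ℕ}
    (Φ : EuclideanSpace ℝ (Fin n) → EuclideanSpace ℝ (Fin m))
    (x : ℕ → EuclideanSpace ℝ (Fin n)) (μ : ℕ → ℝ)
    (L a A B b q p₁ p₂ : ℝ)
    (hL : 0 < L)
    (hLip : ∀ u v, ‖Φ u - Φ v‖ ≤ L * ‖u - v‖)
    (hμpos : ∀ k, 0 < μ k)
    (hμbdd : ∃ M : ℝ, ∀ k, μ k ≤ M)
    (hμdiv : ¬ Summable μ)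
    (ha : 1 ≤ a)
    (hsum : Summable (fun k => μ k * ‖Φ (x k)‖ ^ a))
    (hA : 0 ≤ A) (hB : 0 ≤ B)
    (hb0 : 0 ≤ b) (hba : b ≤ a)
    (hq : 1 ≤ q) (hp₁ : q ≤ p₁) (hp₂ : q ≤ p₂)
    (hrec : ∀ k, ‖x (k+1) - x k‖ ^ q ≤ A * μ k ^ p₁ + B * μ k ^ p₂ * ‖Φ (x k)‖ ^ b) :
    Tendsto (fun k => ‖Φ (x k)‖) atTop (nhds 0) := by
  apply aux_main (fun k => ‖Φ (x k)‖) μ L a A B b q p₁ p₂ hL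
    (fun k => norm_nonneg _) hμpos hμdiv ha hsum hA hB hb0 hba hq hp₁ hp₂
  intro k
  have hq0 : (0:ℝ) < q := lt_of_lt_of_le one_pos hq
  have hRnn : 0 ≤ A * μ k ^ p₁ + B * μ k ^ p₂ * ‖Φ (x k)‖ ^ b := by
    apply add_nonneg
    · exact mul_nonneg hA (Real.rpow_nonneg (hμpos k).le _)
    · exact mul_nonneg (mul_nonneg hB (Real.rpow_nonneg (hμpos k).le _))
        (Real.rpow_nonneg (norm_nonneg _) _)
  have hx1 : ‖x (k+1) - x k‖ ≤ (A * μ k ^ p₁ + B * μ k ^ p₂ * ‖Φ (x k)‖ ^ b) ^ (1/q) := by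
    calc ‖x (k+1) - x k‖ = (‖x (k+1) - x k‖ ^ q) ^ (1/q) := by
          rw [← Real.rpow_mul (norm_nonneg _), mul_one_div, div_self hq0.ne', Real.rpow_one]
      _ ≤ _ := Real.rpow_le_rpow (Real.rpow_nonneg (norm_nonneg _) q) (hrec k) (by positivity)
  calc ‖Φ (x k)‖ - ‖Φ (x (k+1))‖ ≤ ‖Φ (x k) - Φ (x (k+1))‖ := norm_sub_norm_le _ _
    _ ≤ L * ‖x k - x (k+1)‖ := hLip _ _
    _ = L * ‖x (k+1) - x k‖ := by rw [norm_sub_rev]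
    _ ≤ L * (A * μ k ^ p₁ + B * μ k ^ p₂ * ‖Φ (x k)‖ ^ b) ^ (1/q) :=
        mul_le_mul_of_nonneg_left hx1 hL.le
end

section
/- Let φ : ℝⁿ → (−∞,∞] be proper, lower semicontinuous, τ-weakly convex, and L_φ-Lipschitz continuous on its domain. For v ∈ ℝⁿ, x ∈ dom φ, and α ∈ (0, 1/(2τ)), define F_v^α(x) := x − prox_{αφ}(x − αv). Then ‖F_v^α(x)‖² ≤ 4 L_φ² α² + 4 ‖v‖² α². -/
/-!
With `u = x - α • v`, the function `ψ y = φ y + ‖u - y‖² / (2α)` is `(1/α - τ)`-strongly convex on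
`dom φ`, so its minimiser `p` has quadratic growth: `ψ p + (1/α - τ)/2 · ‖x - p‖² ≤ ψ x`.
Expanding `‖u - p‖²`, bounding `φ x - φ p ≤ L‖x - p‖` and `⟪x - p, v⟫ ≤ ‖x - p‖‖v‖` gives
`(2 - ατ)‖x - p‖² ≤ 2α(L + ‖v‖)‖x - p‖`, and `ατ < 1/2` yields `‖x - p‖ ≤ (4/3)α(L + ‖v‖)`.
-/

noncomputable section

/-- `h` is proper: it never takes the value −∞ and is finite somewhere. -/
def ProperFn {n : ℕ} (h : EuclideanSpace ℝ (Fin n) → EReal) : Prop :=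
  (∀ z, h z ≠ ⊥) ∧ ∃ z, h z ≠ ⊤

/-- `h` is τ-weakly convex: h + (τ/2)‖·‖² is convex on the domain of `h`. -/
def WeaklyConvex {n : ℕ} (τ : ℝ) (h : EuclideanSpace ℝ (Fin n) → EReal) : Prop :=
  ∀ x y : EuclideanSpace ℝ (Fin n), h x ≠ ⊤ → h y ≠ ⊤ → ∀ t : ℝ, 0 ≤ t → t ≤ 1 →
    h (t • x + (1 - t) • y) + (((τ/2) * ‖t • x + (1 - t) • y‖ ^ 2 : ℝ) : EReal)
      ≤ (t : EReal) * (h x + (((τ/2) * ‖x‖ ^ 2 : ℝ) : EReal))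
        + ((1 - t : ℝ) : EReal) * (h y + (((τ/2) * ‖y‖ ^ 2 : ℝ) : EReal))

lemma EReal.ne_top_of_add_coe_le {a b : EReal} {r : ℝ} (hb : b ≠ ⊤) (h : a + r ≤ b) :
    a ≠ ⊤ := by
  rintro rfl
  exact hb (top_le_iff.1 (EReal.top_add_coe r ▸ h))

lemma EReal.toReal_add_le_of_add_coe_le {a b : EReal} {r s : ℝ} (ha : a ≠ ⊥) (hb : b ≠ ⊥)
    (hb' : b ≠ ⊤) (h : a + r ≤ b + s) : a.toReal + r ≤ b.toReal + s := by
  have ha' : a ≠ ⊤ := EReal.ne_top_of_add_coe_le (EReal.add_ne_top hb' (EReal.coe_ne_top s)) h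
  lift a to ℝ using ⟨ha', ha⟩
  lift b to ℝ using ⟨hb', hb⟩
  exact_mod_cast h

section StrongConvexity

variable {E : Type*} [NormedAddCommGroup E] [InnerProductSpace ℝ E]

open Filter Topology in
lemma StrongConvexOn.add_sq_le_of_isMinOn {s : Set E} {m : ℝ} {f : E → ℝ} {p x : E}
    (hf : StrongConvexOn s m f) (hmin : IsMinOn f s p) (hp : p ∈ s) (hx : x ∈ s) :
    f p + m / 2 * ‖x - p‖ ^ 2 ≤ f x := by
  have hgap : ∀ t ∈ Set.Ioo (0 : ℝ) 1, f p + (1 - t) * (m / 2 * ‖x - p‖ ^ 2) ≤ f x := by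
    rintro t ⟨ht0, ht1⟩
    have hconv := hf.2 hx hp ht0.le (sub_nonneg.2 ht1.le) (add_sub_cancel t 1)
    have hle : f p ≤ f (t • x + (1 - t) • p) := hmin (hf.1 hx hp ht0.le (by linarith) (by ring))
    simp only [smul_eq_mul] at hconv
    nlinarith
  have hlim : Tendsto (fun t : ℝ => f p + (1 - t) * (m / 2 * ‖x - p‖ ^ 2)) (𝓝[>] 0)
      (𝓝 (f p + m / 2 * ‖x - p‖ ^ 2)) := by
    have : Continuous fun t : ℝ => f p + (1 - t) * (m / 2 * ‖x - p‖ ^ 2) := by fun_prop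
    simpa using (this.tendsto 0).mono_left nhdsWithin_le_nhds
  exact le_of_tendsto hlim (eventually_of_mem (Ioo_mem_nhdsGT one_pos) hgap)

lemma ConvexOn.strongConvexOn_add_sq_norm_sub {s : Set E} {g : E → ℝ} {τ c : ℝ}
    (hg : ConvexOn ℝ s fun y => g y + τ / 2 * ‖y‖ ^ 2) (u : E) :
    StrongConvexOn s (2 * c - τ) fun y => g y + c * ‖u - y‖ ^ 2 := by
  rw [strongConvexOn_iff_convex]
  have hlin : ConvexOn ℝ s fun y => innerSL ℝ (-(2 * c) • u) y :=
    ((innerSL ℝ (-(2 * c) • u) : E →L[ℝ] ℝ) : E →ₗ[ℝ] ℝ).convexOn hg.1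
  refine ((hg.add hlin).add_const (c * ‖u‖ ^ 2)).congr fun y _ => ?_
  simp only [Pi.add_apply, innerSL_apply_apply, real_inner_smul_left, norm_sub_sq_real]
  ring

lemma norm_sub_sq_le_of_isMinOn_prox {s : Set E} {f : E → ℝ} {τ L α : ℝ} {x v p : E}
    (hconv : ConvexOn ℝ s fun y => f y + τ / 2 * ‖y‖ ^ 2)
    (hmin : IsMinOn (fun y => f y + 1 / (2 * α) * ‖x - α • v - y‖ ^ 2) s p)
    (hp : p ∈ s) (hx : x ∈ s) (hlip : f x ≤ f p + L * ‖x - p‖) (hα : 0 < α)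
    (hατ : α * τ < 1 / 2) :
    ‖x - p‖ ^ 2 ≤ 4 * L ^ 2 * α ^ 2 + 4 * ‖v‖ ^ 2 * α ^ 2 := by
  have hgrowth := (hconv.strongConvexOn_add_sq_norm_sub (x - α • v)).add_sq_le_of_isMinOn
    hmin hp hx
  have hux : ‖x - α • v - x‖ = α * ‖v‖ := by
    rw [sub_sub_cancel_left, norm_neg, norm_smul, Real.norm_of_nonneg hα.le]
  have hup : ‖x - α • v - p‖ ^ 2 = ‖x - p‖ ^ 2 - 2 * α * inner ℝ (x - p) v + α ^ 2 * ‖v‖ ^ 2 := by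
    rw [sub_right_comm, norm_sub_sq_real, real_inner_smul_right, norm_smul,
      Real.norm_of_nonneg hα.le]
    ring
  have hinner : inner ℝ (x - p) v ≤ ‖x - p‖ * ‖v‖ := real_inner_le_norm _ _
  simp only [hux, hup] at hgrowth
  field_simp at hgrowth
  have hstep : 3 / 2 * ‖x - p‖ ^ 2 ≤ 2 * α * (L + ‖v‖) * ‖x - p‖ := by
    nlinarith [sq_nonneg ‖x - p‖]
  rcases (norm_nonneg (x - p)).eq_or_lt with hzero | hpos
  · rw [← hzero, sq, zero_mul]
    positivity
  have hR : ‖x - p‖ ≤ 4 / 3 * α * (L + ‖v‖) := by nlinarith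
  nlinarith [mul_self_le_mul_self (norm_nonneg _) hR, sq_nonneg (L - ‖v‖)]

end StrongConvexity

lemma WeaklyConvex.convexOn_toReal_add_sq {n : ℕ} {φ : EuclideanSpace ℝ (Fin n) → EReal} {τ : ℝ}
    (hwc : WeaklyConvex τ φ) (hbot : ∀ z, φ z ≠ ⊥) :
    ConvexOn ℝ {y | φ y ≠ ⊤} fun y => (φ y).toReal + τ / 2 * ‖y‖ ^ 2 := by
  have key : ∀ x, φ x ≠ ⊤ → ∀ y, φ y ≠ ⊤ → ∀ a b : ℝ, 0 ≤ a → 0 ≤ b → a + b = 1 →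
      φ (a • x + b • y) ≠ ⊤ ∧
      (φ (a • x + b • y)).toReal + τ / 2 * ‖a • x + b • y‖ ^ 2
        ≤ a * ((φ x).toReal + τ / 2 * ‖x‖ ^ 2) + b * ((φ y).toReal + τ / 2 * ‖y‖ ^ 2) := by
    intro x hx y hy a b ha hb hab
    obtain rfl : b = 1 - a := by linarith
    have h := hwc x y hx hy a ha (by linarith)
    lift φ x to ℝ using ⟨hx, hbot x⟩ with fx
    lift φ y to ℝ using ⟨hy, hbot y⟩ with fy
    have hz := EReal.ne_top_of_add_coe_le (by norm_cast; exact EReal.coe_ne_top _) h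
    refine ⟨hz, ?_⟩
    lift φ (a • x + (1 - a) • y) to ℝ using ⟨hz, hbot _⟩ with fz
    exact_mod_cast h
  refine ⟨fun x hx y hy a b ha hb hab => (key x hx y hy a b ha hb hab).1,
    fun x hx y hy a b ha hb hab => ?_⟩
  simpa only [smul_eq_mul] using (key x hx y hy a b ha hb hab).2

theorem stmt_10_general {n : ℕ} (φ : EuclideanSpace ℝ (Fin n) → EReal) (τ Lφ α : ℝ)
    (hτ : 0 < τ)
    (hproper : ProperFn φ)
    (hwc : WeaklyConvex τ φ)
    (hLip : ∀ x y, φ x ≠ ⊤ → φ y ≠ ⊤ → φ x ≤ φ y + ((Lφ * ‖x - y‖ : ℝ) : EReal))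
    (hα : 0 < α) (hα' : α < 1/(2*τ))
    (v x p : EuclideanSpace ℝ (Fin n)) (hx : φ x ≠ ⊤)
    (hp : ∀ y, φ p + (((1/(2*α)) * ‖(x - α • v) - p‖ ^ 2 : ℝ) : EReal)
        ≤ φ y + (((1/(2*α)) * ‖(x - α • v) - y‖ ^ 2 : ℝ) : EReal)) :
    ‖x - p‖ ^ 2 ≤ 4 * Lφ ^ 2 * α ^ 2 + 4 * ‖v‖ ^ 2 * α ^ 2 := by
  obtain ⟨hbot, -⟩ := hproper
  have hpdom : φ p ≠ ⊤ :=
    EReal.ne_top_of_add_coe_le (EReal.add_ne_top hx (EReal.coe_ne_top _)) (hp x)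
  have hατ : α * τ < 1 / 2 := by
    rw [lt_div_iff₀ (by positivity)] at hα'
    linarith
  refine norm_sub_sq_le_of_isMinOn_prox (hwc.convexOn_toReal_add_sq hbot)
    (fun y hy => EReal.toReal_add_le_of_add_coe_le (hbot p) (hbot y) hy (hp y)) hpdom hx ?_ hα hατ
  simpa using EReal.toReal_add_le_of_add_coe_le (r := 0) (hbot x) (hbot p) hpdom
    (by simpa using hLip x p hx hpdom)

/-- Lemma E.4: step-length bound ‖x − prox_{αφ}(x − αv)‖² ≤ 4L_φ²α² + 4‖v‖²α². -/
theorem stmt_10 {n : ℕ} (φ : EuclideanSpace ℝ (Fin n) → EReal) (τ Lφ α : ℝ)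
    (hτ : 0 < τ) (hLφ : 0 < Lφ)
    (hproper : ProperFn φ) (hlsc : LowerSemicontinuous φ)
    (hwc : WeaklyConvex τ φ)
    (hLip : ∀ x y, φ x ≠ ⊤ → φ y ≠ ⊤ → φ x ≤ φ y + ((Lφ * ‖x - y‖ : ℝ) : EReal))
    (hα : 0 < α) (hα' : α < 1/(2*τ))
    (v x p : EuclideanSpace ℝ (Fin n)) (hx : φ x ≠ ⊤)
    (hp : ∀ y, φ p + (((1/(2*α)) * ‖(x - α • v) - p‖ ^ 2 : ℝ) : EReal)
        ≤ φ y + (((1/(2*α)) * ‖(x - α • v) - y‖ ^ 2 : ℝ) : EReal)) :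
    ‖x - p‖ ^ 2 ≤ 4 * Lφ ^ 2 * α ^ 2 + 4 * ‖v‖ ^ 2 * α ^ 2 :=
  stmt_10_general φ τ Lφ α hτ hproper hwc hLip hα hα' v x p hx hp
end
end

section
/- Let f : ℝⁿ → ℝ be differentiable with L-Lipschitz gradient and bounded below by f̄, and let φ : ℝⁿ → (−∞,∞] be proper, lower semicontinuous, τ-weakly convex, bounded below by φ̄ on dom φ, and satisfy φ(x) − φ(y) ≤ L_φ‖x−y‖ for all x, y ∈ dom φ. Set ψ = f + φ, ψ̄ = f̄ + φ̄, and let θ ∈ (0, 1/((4/3)L + τ)). Then for all x ∈ dom φ, f(x) − f̄ ≤ 2(env_{θψ}(x) − ψ̄) + L_φ² θ, where env_{θψ}(x) := min_y ψ(y) + (1/(2θ))‖x−y‖². -/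
/-!
The descent lemma at `z`, Cauchy–Schwarz with Young's inequality, and the bound
`‖∇f z‖² ≤ 2L (f z - f̄)` (descent from `z` along `-∇f z / L`) give
`f x - f̄ ≤ 2 (f z - f̄) + L ‖x - z‖²` for every `z`. Since `θ L ≤ 1`, the quadratic term is
absorbed by the penalty `‖x - z‖² / (2θ)` of the envelope, and `φ z ≥ φ̄` (trivially when
`φ z = ⊤`), so every term of the infimum is at least `(f x + f̄)/2 + φ̄`.
-/

noncomputable section

open Set

section LipschitzGradient

variable {E : Type*} [NormedAddCommGroup E] [InnerProductSpace ℝ E] [CompleteSpace E]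
  {f : E → ℝ} {L : ℝ}

local notation "⟪" a ", " b "⟫" => inner ℝ a b

theorem image_le_add_inner_gradient_add_sq (hf : Differentiable ℝ f)
    (hgrad : ∀ u v, ‖gradient f u - gradient f v‖ ≤ L * ‖u - v‖) (u v : E) :
    f v ≤ f u + ⟪gradient f u, v - u⟫ + L / 2 * ‖v - u‖ ^ 2 := by
  set w := v - u
  let g : ℝ → ℝ := fun s => f (u + s • w) - s * ⟪gradient f u, w⟫ - L / 2 * s ^ 2 * ‖w‖ ^ 2
  have hg : ∀ s, HasDerivAt g (⟪gradient f (u + s • w) - gradient f u, w⟫ - L * s * ‖w‖ ^ 2) s := by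
    intro s
    have hline : HasDerivAt (fun s : ℝ => u + s • w) w s := by
      simpa using ((hasDerivAt_id s).smul_const w).const_add u
    have hfline : HasDerivAt (fun s : ℝ => f (u + s • w)) ⟪gradient f (u + s • w), w⟫ s :=
      (hf _).hasGradientAt.hasFDerivAt.comp_hasDerivAt s hline
    refine ((hfline.sub ((hasDerivAt_id s).mul_const ⟪gradient f u, w⟫)).sub
      (((hasDerivAt_pow 2 s).const_mul (L / 2)).mul_const (‖w‖ ^ 2))).congr_deriv ?_
    simp only [inner_sub_left, Nat.cast_ofNat]
    ring
  have hg' : ∀ s ∈ interior (Icc (0 : ℝ) 1),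
      ⟪gradient f (u + s • w) - gradient f u, w⟫ - L * s * ‖w‖ ^ 2 ≤ 0 := by
    intro s hs
    rw [interior_Icc] at hs
    suffices ⟪gradient f (u + s • w) - gradient f u, w⟫ ≤ L * s * ‖w‖ ^ 2 by linarith
    calc ⟪gradient f (u + s • w) - gradient f u, w⟫
        ≤ ‖gradient f (u + s • w) - gradient f u‖ * ‖w‖ := real_inner_le_norm _ _
      _ ≤ L * ‖s • w‖ * ‖w‖ := by
          simpa using mul_le_mul_of_nonneg_right (hgrad (u + s • w) u) (norm_nonneg w)
      _ = L * s * ‖w‖ ^ 2 := by rw [norm_smul, Real.norm_of_nonneg hs.1.le]; ring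
  have hanti : AntitoneOn g (Icc 0 1) :=
    antitoneOn_of_hasDerivWithinAt_nonpos (convex_Icc 0 1)
      (fun s _ => (hg s).continuousAt.continuousWithinAt) (fun s _ => (hg s).hasDerivWithinAt) hg'
  have hends := hanti (left_mem_Icc.2 zero_le_one) (right_mem_Icc.2 zero_le_one) zero_le_one
  simp only [g, zero_smul, one_smul, add_zero, add_sub_cancel, w] at hends
  linarith

theorem sq_norm_gradient_le (hL : 0 < L) (hf : Differentiable ℝ f)
    (hgrad : ∀ u v, ‖gradient f u - gradient f v‖ ≤ L * ‖u - v‖) {m : ℝ} (hm : ∀ x, m ≤ f x)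
    (z : E) : ‖gradient f z‖ ^ 2 ≤ 2 * L * (f z - m) := by
  set g := gradient f z
  have hstep := image_le_add_inner_gradient_add_sq hf hgrad z (z - L⁻¹ • g)
  rw [sub_sub_cancel_left, inner_neg_right, real_inner_smul_right, real_inner_self_eq_norm_sq,
    norm_neg, norm_smul, norm_inv, Real.norm_of_nonneg hL.le] at hstep
  have hmin := hm (z - L⁻¹ • g)
  have hscaled : L⁻¹ * ‖g‖ ^ 2 ≤ 2 * (f z - m) := by
    have hsq : L / 2 * (L⁻¹ * ‖g‖) ^ 2 = L⁻¹ * ‖g‖ ^ 2 / 2 := by field_simp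
    linarith
  calc ‖g‖ ^ 2 = L * (L⁻¹ * ‖g‖ ^ 2) := by field_simp
    _ ≤ 2 * L * (f z - m) := by nlinarith

theorem image_sub_le_two_mul_image_sub_add (hL : 0 < L) (hf : Differentiable ℝ f)
    (hgrad : ∀ u v, ‖gradient f u - gradient f v‖ ≤ L * ‖u - v‖) {m : ℝ} (hm : ∀ x, m ≤ f x)
    (x z : E) : f x - m ≤ 2 * (f z - m) + L * ‖x - z‖ ^ 2 := by
  set g := gradient f z
  have hdesc := image_le_add_inner_gradient_add_sq hf hgrad z x
  have hgrad_sq := sq_norm_gradient_le hL hf hgrad hm z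
  have hyoung : 2 * L * ⟪g, x - z⟫ ≤ ‖g‖ ^ 2 + L ^ 2 * ‖x - z‖ ^ 2 := by
    nlinarith [real_inner_le_norm g (x - z), sq_nonneg (‖g‖ - L * ‖x - z‖)]
  nlinarith

end LipschitzGradient

theorem EReal.coe_le_two_mul_sub_add {r s d : ℝ} {I : EReal} (h : ((r / 2 + s : ℝ) : EReal) ≤ I)
    (hd : 0 ≤ d) : (r : EReal) ≤ ((2 : ℝ) : EReal) * (I - (s : EReal)) + (d : EReal) := by
  induction I using EReal.rec with
  | bot => exact absurd (le_bot_iff.1 h) (EReal.coe_ne_bot _)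
  | top => simp [EReal.mul_top_of_pos]
  | coe a =>
    rw [← EReal.coe_sub, ← EReal.coe_mul, ← EReal.coe_add, EReal.coe_le_coe_iff]
    linarith [EReal.coe_le_coe_iff.1 h]

theorem stmt_12_general {n : ℕ} (f : EuclideanSpace ℝ (Fin n) → ℝ)
    (φ : EuclideanSpace ℝ (Fin n) → EReal)
    (L τ Lφ fbar φbar θ : ℝ)
    (hL : 0 < L) (hτ : 0 < τ)
    (hdiff : Differentiable ℝ f)
    (hgrad : ∀ u v, ‖gradient f u - gradient f v‖ ≤ L * ‖u - v‖)
    (hfb : ∀ x, fbar ≤ f x)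
    (hφb : ∀ x, φ x ≠ ⊤ → (φbar : EReal) ≤ φ x)
    (hθ : 0 < θ) (hθ' : θ < 1/((4/3)*L + τ))
    (x : EuclideanSpace ℝ (Fin n)) :
    ((f x - fbar : ℝ) : EReal)
      ≤ ((2 : ℝ) : EReal) *
          ((⨅ z : EuclideanSpace ℝ (Fin n),
              ((f z : ℝ) : EReal) + φ z + (((1/(2*θ)) * ‖x - z‖ ^ 2 : ℝ) : EReal))
            - ((fbar + φbar : ℝ) : EReal))
        + ((Lφ ^ 2 * θ : ℝ) : EReal) := by
  have hLθ : L ≤ 2 * (1 / (2 * θ)) := by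
    rw [lt_div_iff₀ (by positivity)] at hθ'
    field_simp
    nlinarith [mul_pos hτ hθ]
  have hφ : ∀ z, (φbar : EReal) ≤ φ z := fun z =>
    (eq_or_ne (φ z) ⊤).elim (fun h => h ▸ le_top) (hφb z)
  refine EReal.coe_le_two_mul_sub_add (le_iInf fun z => ?_) (by positivity)
  calc (((f x - fbar) / 2 + (fbar + φbar) : ℝ) : EReal)
      ≤ ((f z + φbar + 1 / (2 * θ) * ‖x - z‖ ^ 2 : ℝ) : EReal) := by
        have hfz := image_sub_le_two_mul_image_sub_add hL hdiff hgrad hfb x z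
        have hpenalty := mul_le_mul_of_nonneg_right hLθ (sq_nonneg ‖x - z‖)
        exact EReal.coe_le_coe_iff.2 (by linarith)
    _ ≤ _ := by
        rw [EReal.coe_add, EReal.coe_add]
        gcongr
        exact hφ z

/-- Lemma E.3: f(x) − f̄ ≤ 2(env_{θψ}(x) − ψ̄) + L_φ²θ on dom φ, where ψ = f + φ. -/
theorem stmt_12 {n : ℕ} (f : EuclideanSpace ℝ (Fin n) → ℝ)
    (φ : EuclideanSpace ℝ (Fin n) → EReal)
    (L τ Lφ fbar φbar θ : ℝ)
    (hL : 0 < L) (hτ : 0 < τ) (hLφ : 0 < Lφ)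
    (hdiff : Differentiable ℝ f)
    (hgrad : ∀ u v, ‖gradient f u - gradient f v‖ ≤ L * ‖u - v‖)
    (hfb : ∀ x, fbar ≤ f x)
    (hproper : ProperFn φ) (hlsc : LowerSemicontinuous φ)
    (hwc : WeaklyConvex τ φ)
    (hφb : ∀ x, φ x ≠ ⊤ → (φbar : EReal) ≤ φ x)
    (hφLip : ∀ x y, φ x ≠ ⊤ → φ y ≠ ⊤ → φ x ≤ φ y + ((Lφ * ‖x - y‖ : ℝ) : EReal))
    (hθ : 0 < θ) (hθ' : θ < 1/((4/3)*L + τ))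
    (x : EuclideanSpace ℝ (Fin n)) (hx : φ x ≠ ⊤) :
    ((f x - fbar : ℝ) : EReal)
      ≤ ((2 : ℝ) : EReal) *
          ((⨅ z : EuclideanSpace ℝ (Fin n),
              ((f z : ℝ) : EReal) + φ z + (((1/(2*θ)) * ‖x - z‖ ^ 2 : ℝ) : EReal))
            - ((fbar + φbar : ℝ) : EReal))
        + ((Lφ ^ 2 * θ : ℝ) : EReal) :=
  stmt_12_general f φ L τ Lφ fbar φbar θ hL hτ hdiff hgrad hfb hφb hθ hθ' x
end
end
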